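/- arXiv:math/0505461 — 3 statements merged into one kernel-verified Lean document; each statement's English description precedes it below -/
import Mathlib

section
/- Let U ⊆ ℝ² be open, let u : U → ℝ be harmonic on U (u is C² with Δu = 0 on U), and let α = (α₁, α₂) : U → ℝ² be such that, identifying ℝ² with ℂ, the function α₁ + iα₂ is holomorphic on U. Then the vector field |∇u|² α − 2(α·∇u)∇u is divergence-free on U: div(|∇u|² α − 2(α·∇u)∇u) = 0 at every point of U. -/
open MeasureTheory Filter Set
open scoped ENNReal Topology Real NNReal

noncomputable section

/-- Parametrization of the graph `t ↦ (t, φ t)`, as a point of `ℂ ≃ ℝ²`. -/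
def bmap (φ : ℝ → ℝ) (t : ℝ) : ℂ := ⟨t, φ t⟩

/-- The Lipschitz graph domain `Ω = {(x₁,x₂) : x₂ > φ(x₁)}`. -/
def gDomain (φ : ℝ → ℝ) : Set ℂ := {z : ℂ | φ z.re < z.im}

/-- The boundary `∂Ω` of the graph domain. -/
def gBdry (φ : ℝ → ℝ) : Set ℂ := {z : ℂ | z.im = φ z.re}

/-- The Dirichlet portion `D = {(x₁, φ x₁) : x₁ < 0}` of the boundary. -/
def Dside (φ : ℝ → ℝ) : Set ℂ := {z : ℂ | z.im = φ z.re ∧ z.re < 0}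

/-- The Neumann portion `N = {(x₁, φ x₁) : x₁ ≥ 0}` of the boundary. -/
def Nside (φ : ℝ → ℝ) : Set ℂ := {z : ℂ | z.im = φ z.re ∧ 0 ≤ z.re}

/-- Arc length measure `dσ` on `∂Ω`: the pushforward of `√(1+φ'(t)²) dt`. -/
def sigma0 (φ : ℝ → ℝ) : Measure ℂ :=
  Measure.map (bmap φ)
    (volume.withDensity fun t => ENNReal.ofReal (Real.sqrt (1 + deriv φ t ^ 2)))

/-- Weighted arc length `dσ_ε = |x|^ε dσ` on `∂Ω`. -/
def sigmaW (φ : ℝ → ℝ) (ε : ℝ) : Measure ℂ :=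
  (sigma0 φ).withDensity fun x => ENNReal.ofReal (‖x‖ ^ ε)

/-- The open cone `x + {r e^{iθ} : r > 0, |θ - π/2| < θ₀}` with vertex `x`. -/
def ntCone (θ₀ : ℝ) (x : ℂ) : Set ℂ :=
  {z : ℂ | z ≠ x ∧ |Complex.arg (z - x) - π / 2| < θ₀}

/-- The nontangential approach region `Γ(x) ∩ Ω`. -/
def ntRegion (φ : ℝ → ℝ) (θ₀ : ℝ) (x : ℂ) : Set ℂ := ntCone θ₀ x ∩ gDomain φ

/-- The nontangential maximal function `v*(x) = sup_{y ∈ Γ(x)} v(y)` (for `v ≥ 0`),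
valued in `ℝ≥0∞`. -/
def ntMax (φ : ℝ → ℝ) (θ₀ : ℝ) (v : ℂ → ℝ) (x : ℂ) : ℝ≥0∞ :=
  ⨆ y ∈ ntRegion φ θ₀ x, ENNReal.ofReal (v y)

/-- Nontangential limit of `v` at the boundary point `x`. -/
def NTLim (φ : ℝ → ℝ) (θ₀ : ℝ) {α : Type*} [TopologicalSpace α]
    (v : ℂ → α) (x : ℂ) (c : α) : Prop :=
  Filter.Tendsto v (nhdsWithin x (ntRegion φ θ₀ x)) (nhds c)

/-- Gradient of `u : ℂ → ℝ`, written as a point of `ℂ ≃ ℝ²`. -/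
def grad (u : ℂ → ℝ) (z : ℂ) : ℂ := ⟨fderiv ℝ u z 1, fderiv ℝ u z Complex.I⟩

/-- Euclidean dot product on `ℂ ≃ ℝ²`. -/
def dotR (a b : ℂ) : ℝ := a.re * b.re + a.im * b.im

/-- Laplacian of `u : ℂ → ℝ`. -/
def lap (u : ℂ → ℝ) (z : ℂ) : ℝ :=
  fderiv ℝ (fun w => fderiv ℝ u w 1) z 1 + fderiv ℝ (fun w => fderiv ℝ u w Complex.I) z Complex.I

/-- Divergence of the vector field `F : ℂ → ℂ ≃ ℝ²`. -/
def divg (F : ℂ → ℂ) (z : ℂ) : ℝ :=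
  fderiv ℝ (fun w => (F w).re) z 1 + fderiv ℝ (fun w => (F w).im) z Complex.I

/-- `u` is harmonic on `s`. -/
def HarmOn (u : ℂ → ℝ) (s : Set ℂ) : Prop :=
  ContDiffOn ℝ 2 u s ∧ ∀ z ∈ s, lap u z = 0

/-- Outer unit normal `ν = (φ'(x₁), -1)/√(1+φ'(x₁)²)` at a boundary point. -/
def nuVec (φ : ℝ → ℝ) (x : ℂ) : ℂ :=
  (Real.sqrt (1 + deriv φ x.re ^ 2))⁻¹ • (⟨deriv φ x.re, -1⟩ : ℂ)

/-- Unit tangent `T = (1, φ'(x₁))/√(1+φ'(x₁)²)` at a boundary point. -/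
def tanVec (φ : ℝ → ℝ) (x : ℂ) : ℂ :=
  (Real.sqrt (1 + deriv φ x.re ^ 2))⁻¹ • (⟨1, deriv φ x.re⟩ : ℂ)

/-- Branch of the argument with values in `(-π/2, 3π/2]`. -/
def argB (z : ℂ) : ℝ :=
  if Complex.arg z < -(π / 2) then Complex.arg z + 2 * π else Complex.arg z

/-- The branch `z^ε = r^ε e^{iεθ}`, `θ ∈ (-π/2, 3π/2]`, of the complex power,
holomorphic off the closed negative imaginary axis. -/
def cpowB (ε : ℝ) (z : ℂ) : ℂ :=
  ((‖z‖ ^ ε : ℝ) : ℂ) * Complex.exp (Complex.I * ((ε * argB z : ℝ) : ℂ))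

/-- `h` is the arc-length derivative `df/dσ` of `f` along the part of the boundary
parametrized by `t ∈ S`. -/
def HasArcDeriv (φ : ℝ → ℝ) (f h : ℂ → ℝ) (S : Set ℝ) : Prop :=
  ∀ t₁ ∈ S, ∀ t₂ ∈ S,
    IntervalIntegrable (fun t => h (bmap φ t) * Real.sqrt (1 + deriv φ t ^ 2)) volume t₁ t₂ ∧
    f (bmap φ t₂) - f (bmap φ t₁) = ∫ t in t₁..t₂, h (bmap φ t) * Real.sqrt (1 + deriv φ t ^ 2)

/-- Membership in `L^p(S, μ)`. -/
def MemLpB (p : ℝ) (μ : Measure ℂ) (S : Set ℂ) (f : ℂ → ℝ) : Prop :=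
  AEMeasurable f (μ.restrict S) ∧ (∫⁻ x in S, ENNReal.ofReal |f x| ^ p ∂μ) < ⊤

/-- The `L^p(S, μ)` norm. -/
def lpN (p : ℝ) (μ : Measure ℂ) (S : Set ℂ) (f : ℂ → ℝ) : ℝ≥0∞ :=
  (∫⁻ x in S, ENNReal.ofReal |f x| ^ p ∂μ) ^ (1 / p)

/-- The `L^p(μ)` norm of the nontangential maximal function of `v`. -/
def ntMaxLp (φ : ℝ → ℝ) (θ₀ p : ℝ) (μ : Measure ℂ) (v : ℂ → ℝ) : ℝ≥0∞ :=
  (∫⁻ x, ntMax φ θ₀ v x ^ p ∂μ) ^ (1 / p)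

/-- `u` solves the mixed problem for `L^p(μ)` with Dirichlet data `fD` on `D` and
Neumann data `fN` on `N`. -/
def MixedSol (φ : ℝ → ℝ) (θ₀ p : ℝ) (μ : Measure ℂ) (fD fN : ℂ → ℝ) (u : ℂ → ℝ) : Prop :=
  HarmOn u (gDomain φ) ∧
  (∀ᵐ x ∂(sigma0 φ), x ∈ Dside φ → NTLim φ θ₀ u x (fD x)) ∧
  (∃ g : ℂ → ℂ, (∀ᵐ x ∂(sigma0 φ), NTLim φ θ₀ (grad u) x (g x)) ∧
      ∀ᵐ x ∂(sigma0 φ), x ∈ Nside φ → dotR (g x) (nuVec φ x) = fN x) ∧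
  (∫⁻ x, ntMax φ θ₀ (fun y => ‖grad u y‖) x ^ p ∂μ) < ⊤

/-- `u` solves the Neumann problem for `L^p(μ)` with data `f`. -/
def NeumannSol (φ : ℝ → ℝ) (θ₀ p : ℝ) (μ : Measure ℂ) (f : ℂ → ℝ) (u : ℂ → ℝ) : Prop :=
  HarmOn u (gDomain φ) ∧
  (∃ g : ℂ → ℂ, (∀ᵐ x ∂(sigma0 φ), NTLim φ θ₀ (grad u) x (g x)) ∧
      ∀ᵐ x ∂(sigma0 φ), dotR (g x) (nuVec φ x) = f x) ∧
  (∫⁻ x, ntMax φ θ₀ (fun y => ‖grad u y‖) x ^ p ∂μ) < ⊤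

/-- `u` solves the regularity problem for `L^p(μ)` with data `f`. -/
def RegSol (φ : ℝ → ℝ) (θ₀ p : ℝ) (μ : Measure ℂ) (f : ℂ → ℝ) (u : ℂ → ℝ) : Prop :=
  HarmOn u (gDomain φ) ∧
  (∀ᵐ x ∂(sigma0 φ), NTLim φ θ₀ u x (f x)) ∧
  (∃ g : ℂ → ℂ, ∀ᵐ x ∂(sigma0 φ), NTLim φ θ₀ (grad u) x (g x)) ∧
  (∫⁻ x, ntMax φ θ₀ (fun y => ‖grad u y‖) x ^ p ∂μ) < ⊤

/-- An `H¹(dσ_ε)`-atom. -/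
def H1Atom (φ : ℝ → ℝ) (ε : ℝ) (a : ℂ → ℝ) : Prop :=
  ∃ x ∈ gBdry φ, ∃ s : ℝ, 0 < s ∧
    (∀ y, y ∉ Metric.ball x s ∩ gBdry φ → a y = 0) ∧
    (∫ y, a y ∂(sigma0 φ)) = 0 ∧
    ∀ y, |a y| ≤ ((sigmaW φ ε (Metric.ball x s ∩ gBdry φ)).toReal)⁻¹

/-- An atomic representation `f = Σ λ_j a_j` (convergence in `L¹(dσ_ε)`). -/
def H1Rep (φ : ℝ → ℝ) (ε : ℝ) (f : ℂ → ℝ) (lam : ℕ → ℝ) (a : ℕ → ℂ → ℝ) : Prop :=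
  (∀ j, H1Atom φ ε (a j)) ∧ Summable (fun j => |lam j|) ∧
  Filter.Tendsto
    (fun n => ∫⁻ x, ENNReal.ofReal |f x - ∑ j ∈ Finset.range n, lam j * a j x| ∂(sigmaW φ ε))
    Filter.atTop (nhds 0)

def MemH1 (φ : ℝ → ℝ) (ε : ℝ) (f : ℂ → ℝ) : Prop := ∃ lam a, H1Rep φ ε f lam a

def H1norm (φ : ℝ → ℝ) (ε : ℝ) (f : ℂ → ℝ) : ℝ≥0∞ :=
  sInf {c | ∃ lam a, H1Rep φ ε f lam a ∧ c = ∑' j, ENNReal.ofReal |lam j|}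

/-- An `H^{1,1}(dσ_ε)`-atom: an indefinite arc-length integral of an `H¹(dσ_ε)`-atom. -/
def H11Atom (φ : ℝ → ℝ) (ε : ℝ) (A : ℂ → ℝ) : Prop :=
  ∃ a, H1Atom φ ε a ∧ ∃ t₀ : ℝ, ∀ t : ℝ,
    A (bmap φ t) = ∫ s in t₀..t, a (bmap φ s) * Real.sqrt (1 + deriv φ s ^ 2)

def H11Rep (φ : ℝ → ℝ) (ε : ℝ) (F : ℂ → ℝ) (lam : ℕ → ℝ) (A : ℕ → ℂ → ℝ) : Prop :=
  (∀ j, H11Atom φ ε (A j)) ∧ Summable (fun j => |lam j|) ∧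
  ∀ᵐ x ∂(sigma0 φ), HasSum (fun j => lam j * A j x) (F x)

def MemH11 (φ : ℝ → ℝ) (ε : ℝ) (F : ℂ → ℝ) : Prop := ∃ lam A, H11Rep φ ε F lam A

def H11norm (φ : ℝ → ℝ) (ε : ℝ) (F : ℂ → ℝ) : ℝ≥0∞ :=
  sInf {c | ∃ lam A, H11Rep φ ε F lam A ∧ c = ∑' j, ENNReal.ofReal |lam j|}

/-- Membership in `H¹(S, dσ_ε)`: restriction to `S` of an element of `H¹(dσ_ε)`. -/
def MemH1On (φ : ℝ → ℝ) (ε : ℝ) (S : Set ℂ) (f : ℂ → ℝ) : Prop :=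
  ∃ g, MemH1 φ ε g ∧ Set.EqOn f g S

def H1normOn (φ : ℝ → ℝ) (ε : ℝ) (S : Set ℂ) (f : ℂ → ℝ) : ℝ≥0∞ :=
  sInf {c | ∃ g lam a, H1Rep φ ε g lam a ∧ Set.EqOn f g S ∧ c = ∑' j, ENNReal.ofReal |lam j|}

def MemH11On (φ : ℝ → ℝ) (ε : ℝ) (S : Set ℂ) (F : ℂ → ℝ) : Prop :=
  ∃ G, MemH11 φ ε G ∧ Set.EqOn F G S

def H11normOn (φ : ℝ → ℝ) (ε : ℝ) (S : Set ℂ) (F : ℂ → ℝ) : ℝ≥0∞ :=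
  sInf {c | ∃ G lam A, H11Rep φ ε G lam A ∧ Set.EqOn F G S ∧ c = ∑' j, ENNReal.ofReal |lam j|}

/-- An `H¹(N, dσ_ε)`-atom: the restriction to `N` of an `H¹(dσ_ε)`-atom. -/
def H1AtomN (φ : ℝ → ℝ) (ε : ℝ) (a : ℂ → ℝ) : Prop :=
  ∃ b, H1Atom φ ε b ∧ Set.EqOn a b (Nside φ)

/-! With `g = ∂ₓu + i ∂ᵧu` the gradient, the Rellich field is `|g|² α − 2 Re(α ḡ) g = −ᾱ g²`,
the complex conjugate of the function `−α ḡ²`. For harmonic `u` the function `ḡ = ∂ₓu − i ∂ᵧu`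
is holomorphic, hence so is `−α ḡ²`, and by the Cauchy–Riemann equations the conjugate of a
holomorphic function is divergence free. -/

open Complex ComplexConjugate InnerProductSpace
open scoped Laplacian

theorem lap_eq_laplacian {u : ℂ → ℝ} {z : ℂ} (hu : ContDiffAt ℝ 2 u z) : lap u z = Δ u z := by
  have hd : DifferentiableAt ℝ (fderiv ℝ u) z :=
    (hu.fderiv_right (m := 1) (by norm_num)).differentiableAt (by norm_num)
  simp [lap, laplacian_eq_iteratedFDeriv_complexPlane, iteratedFDeriv_two_apply,
    fderiv_clm_apply hd (differentiableAt_const _)]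

theorem harmonicAt_of_lap_eq_zero {U : Set ℂ} (hU : IsOpen U) {u : ℂ → ℝ}
    (hu : ContDiffOn ℝ 2 u U) (hΔ : ∀ z ∈ U, lap u z = 0) {z : ℂ} (hz : z ∈ U) :
    HarmonicAt u z := by
  refine ⟨hu.contDiffAt (hU.mem_nhds hz), ?_⟩
  filter_upwards [hU.mem_nhds hz] with w hw
  rw [← lap_eq_laplacian (hu.contDiffAt (hU.mem_nhds hw))]
  exact hΔ w hw

theorem divg_conj_eq_zero {h : ℂ → ℂ} {z : ℂ} (hh : DifferentiableAt ℂ h z) :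
    divg (fun w => conj (h w)) z = 0 := by
  have hr := (hh.restrictScalars ℝ).hasFDerivAt
  have hCR := (differentiableAt_complex_iff_differentiableAt_real.1 hh).2
  have hre : HasFDerivAt (fun w => (conj (h w)).re) (reCLM.comp (fderiv ℝ h z)) z :=
    reCLM.hasFDerivAt.comp z hr
  have him : HasFDerivAt (fun w => (conj (h w)).im) (-(imCLM.comp (fderiv ℝ h z))) z :=
    (imCLM.hasFDerivAt.comp z hr).neg
  rw [divg, hre.fderiv, him.fderiv]
  simp [hCR]

theorem rellich_field_eq_conj (a g : ℂ) :
    ‖g‖ ^ 2 • a - (2 * dotR a g) • g = conj (-(a * conj g ^ 2)) := by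
  rw [Complex.sq_norm]
  apply Complex.ext <;> simp [dotR, Complex.normSq_apply, pow_two] <;> ring

theorem conj_grad (u : ℂ → ℝ) (w : ℂ) :
    conj (grad u w) = fderiv ℝ u w 1 - I * fderiv ℝ u w I := by
  apply Complex.ext <;> simp [grad]

/-- L. Escauriaza's identity: if `u` is harmonic on the open set `U ⊆ ℝ² ≃ ℂ`
and `α = (α₁, α₂)` has `α₁ + iα₂` holomorphic on `U`, then
`div(|∇u|² α − 2(α·∇u)∇u) = 0` at every point of `U`. -/
theorem statement1 (U : Set ℂ) (hU : IsOpen U) (u : ℂ → ℝ) (α : ℂ → ℂ)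
    (hu : ContDiffOn ℝ 2 u U) (hΔ : ∀ z ∈ U, lap u z = 0)
    (hα : DifferentiableOn ℂ α U) :
    ∀ z ∈ U,
      divg (fun w => (‖grad u w‖ ^ 2) • α w
        - (2 * dotR (α w) (grad u w)) • grad u w) z = 0 := by
  intro z hz
  have hg : DifferentiableAt ℂ (fun w => conj (grad u w)) z := by
    simpa only [conj_grad] using
      HarmonicAt.differentiableAt_complex_partial (harmonicAt_of_lap_eq_zero hU hu hΔ hz)
  simp only [rellich_field_eq_conj]
  exact divg_conj_eq_zero (((hα.differentiableAt (hU.mem_nhds hz)).mul (hg.pow 2)).neg)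
end
end

section
/- Let Ω be a Lipschitz graph domain with Lipschitz constant M > 0 and set β = arctan M > 0. For every ε with |ε| < (π − 2β)/(π + 2β) there exist β₀ = β₀(ε, M) with β < β₀ < π/2 and λ ∈ ℝ such that the vector field α(z) = (Re(e^{iλ} z^ε), Im(e^{iλ} z^ε)) satisfies −|x|^ε ≤ α(x)·ν(x) < −|x|^ε · sin(β₀ − β) for a.e. (with respect to arc length) x ∈ ∂Ω. -/
open MeasureTheory Filter Set
open scoped ENNReal Topology Real NNReal

noncomputable section

/-! A boundary point `x = (t, φ t)` lies in the double sector `|x₂| ≤ M |x₁|` (as `φ 0 = 0`), so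
its argument `θ ∈ (-π/2, 3π/2)` satisfies `|θ - π/2| ≤ π/2 + β`, while the normal is
`ν = (sin γ, -cos γ)` with `γ = arctan φ'(t) ∈ [-β, β]`. For `λ = (1 - ε) π/2` this gives
`α·ν = -|x|^ε cos (ε (θ - π/2) - γ)`, and the angle inside the cosine has modulus at most
`a = |ε| (π/2 + β) + β`, which is `< π/2` exactly when `|ε| < (π - 2β)/(π + 2β)`.
Any `β₀` with `β < β₀ < β + π/2 - a` then works. -/

open Real

lemma argB_eq_arctan_or_eq_arctan_add_pi {z : ℂ} (h : z.re ≠ 0) :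
    argB z = arctan (z.im / z.re) ∨ argB z = arctan (z.im / z.re) + π := by
  rcases h.lt_or_gt with hre | hre
  · right
    rcases le_or_gt 0 z.im with him | him
    · have h₁ : π / 2 < Complex.arg z := by
        by_contra! h₁
        exact (Complex.arg_le_pi_div_two_iff.mp h₁).elim hre.not_ge him.not_gt
      have h₂ := Complex.arg_le_pi z
      rw [argB, if_neg (by linarith), ← Complex.tan_arg, ← tan_periodic.sub_eq,
        arctan_tan (by linarith) (by linarith)]
      ring
    · have h₁ : Complex.arg z < -(π / 2) := by
        by_contra! h₁
        exact (Complex.neg_pi_div_two_le_arg_iff.mp h₁).elim hre.not_ge him.not_ge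
      have h₂ := Complex.neg_pi_lt_arg z
      rw [argB, if_pos h₁, ← Complex.tan_arg, ← tan_periodic,
        arctan_tan (by linarith) (by linarith)]
      ring
  · left
    have h₁ : -(π / 2) < Complex.arg z := Complex.neg_pi_div_two_lt_arg_iff.mpr (Or.inl hre)
    have h₂ : Complex.arg z < π / 2 := Complex.arg_lt_pi_div_two_iff.mpr (Or.inl hre)
    rw [argB, if_neg h₁.not_gt, ← Complex.tan_arg, arctan_tan h₁ h₂]

lemma abs_arctan_le_arctan {x M : ℝ} (h : |x| ≤ M) : |arctan x| ≤ arctan M := by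
  rw [abs_le] at h ⊢
  exact ⟨by simpa [arctan_neg] using arctan_strictMono.monotone h.1,
    arctan_strictMono.monotone h.2⟩

lemma abs_argB_sub_pi_div_two_le {z : ℂ} {M : ℝ} (hre : z.re ≠ 0) (h : |z.im| ≤ M * |z.re|) :
    |argB z - π / 2| ≤ π / 2 + arctan M := by
  have hslope : |arctan (z.im / z.re)| ≤ arctan M := by
    refine abs_arctan_le_arctan ?_
    rwa [abs_div, div_le_iff₀ (abs_pos.mpr hre)]
  have := pi_pos
  rw [abs_le] at hslope ⊢
  rcases argB_eq_arctan_or_eq_arctan_add_pi hre with h' | h' <;> rw [h'] <;>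
    constructor <;> linarith

lemma exp_mul_cpowB (lam ε : ℝ) (z : ℂ) :
    Complex.exp (Complex.I * lam) * cpowB ε z
      = ((‖z‖ ^ ε : ℝ) : ℂ) * Complex.exp (((lam + ε * argB z : ℝ) : ℂ) * Complex.I) := by
  rw [cpowB, mul_left_comm, ← Complex.exp_add]
  push_cast
  ring_nf

/-- `ν = (sin γ, -cos γ)` with `γ = arctan φ'`, so pairing with `r e^{iψ}` gives
`-r sin (ψ - γ)`. -/
lemma dotR_ofReal_mul_exp_nuVec (φ : ℝ → ℝ) (x : ℂ) (r ψ : ℝ) :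
    dotR ((r : ℂ) * Complex.exp ((ψ : ℂ) * Complex.I)) (nuVec φ x)
      = -(r * cos (ψ - π / 2 - arctan (deriv φ x.re))) := by
  have hs : 0 < √(1 + deriv φ x.re ^ 2) := sqrt_pos.mpr (by positivity)
  rw [sub_right_comm, cos_sub_pi_div_two, sin_sub, sin_arctan, cos_arctan, dotR, nuVec,
    Complex.smul_re, Complex.smul_im, Complex.exp_mul_I, ← Complex.ofReal_cos, ← Complex.ofReal_sin]
  simp only [Complex.mul_re, Complex.mul_im, Complex.add_re, Complex.add_im, Complex.ofReal_re,
    Complex.ofReal_im, Complex.I_re, Complex.I_im, smul_eq_mul]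
  field_simp
  ring

lemma dotR_rotate_cpowB_nuVec (φ : ℝ → ℝ) (ε : ℝ) (z : ℂ) :
    dotR (Complex.exp (Complex.I * (π / 2 - ε * (π / 2) : ℝ)) * cpowB ε z) (nuVec φ z)
      = -(‖z‖ ^ ε * cos (ε * (argB z - π / 2) - arctan (deriv φ z.re))) := by
  rw [exp_mul_cpowB, dotR_ofReal_mul_exp_nuVec]
  ring_nf

lemma sin_lt_cos_of_abs_lt {δ A : ℝ} (hδ : 0 ≤ δ) (h : |A| < π / 2 - δ) : sin δ < cos A := by
  have := pi_pos
  rw [← cos_pi_div_two_sub, ← cos_abs A]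
  exact strictAntiOn_cos ⟨abs_nonneg A, by linarith⟩ ⟨by linarith [abs_nonneg A], by linarith⟩ h

lemma abs_deriv_le_of_lipschitz {φ : ℝ → ℝ} {M : ℝ} (hφ : ∀ s t, |φ s - φ t| ≤ M * |s - t|)
    (t : ℝ) : |deriv φ t| ≤ M :=
  norm_deriv_le_of_lip' (f := φ) (by simpa using (abs_nonneg _).trans (hφ 1 0))
    (Eventually.of_forall fun s => hφ s t)

lemma ae_sigma0_mem_gBdry_re_ne_zero {φ : ℝ → ℝ} (hφ : Measurable φ) :
    ∀ᵐ x ∂(sigma0 φ), x ∈ gBdry φ ∧ x.re ≠ 0 := by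
  have hbmap : Measurable (bmap φ) :=
    Complex.measurableEquivRealProd.symm.measurable.comp (measurable_id.prodMk hφ)
  rw [sigma0, ae_map_iff hbmap.aemeasurable]
  · exact (withDensity_absolutelyContinuous _ _).ae_le
      ((Measure.ae_ne volume 0).mono fun t ht => ⟨rfl, ht⟩)
  · exact (measurableSet_eq_fun Complex.measurable_im (hφ.comp Complex.measurable_re)).inter
      ((measurableSet_singleton 0).compl.preimage Complex.measurable_re)

lemma abs_boundary_angle_le {φ : ℝ → ℝ} {M : ℝ} (hφ : ∀ s t, |φ s - φ t| ≤ M * |s - t|)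
    (hφ0 : φ 0 = 0) (ε : ℝ) {z : ℂ} (hz : z ∈ gBdry φ) (hre : z.re ≠ 0) :
    |ε * (argB z - π / 2) - arctan (deriv φ z.re)| ≤ |ε| * (π / 2 + arctan M) + arctan M := by
  have hsector : |z.im| ≤ M * |z.re| := by
    have him : z.im = φ z.re := hz
    simpa [him, hφ0] using hφ z.re 0
  calc _ ≤ |ε * (argB z - π / 2)| + |arctan (deriv φ z.re)| := abs_sub _ _
    _ ≤ _ := by
      rw [abs_mul]
      gcongr
      · exact abs_argB_sub_pi_div_two_le hre hsector
      · exact abs_arctan_le_arctan (abs_deriv_le_of_lipschitz hφ _)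

theorem statement2_general (φ : ℝ → ℝ) (M : ℝ)
    (hφ : ∀ s t, |φ s - φ t| ≤ M * |s - t|) (hφ0 : φ 0 = 0)
    (ε : ℝ) (hε : |ε| < (π - 2 * Real.arctan M) / (π + 2 * Real.arctan M)) :
    ∃ β₀ lam : ℝ, Real.arctan M < β₀ ∧ β₀ < π / 2 ∧
      ∀ᵐ x ∂(sigma0 φ),
        -(‖x‖ ^ ε) ≤ dotR (Complex.exp (Complex.I * lam) * cpowB ε x) (nuVec φ x) ∧
        dotR (Complex.exp (Complex.I * lam) * cpowB ε x) (nuVec φ x)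
          < -(‖x‖ ^ ε * Real.sin (β₀ - Real.arctan M)) := by
  set β := arctan M
  set a := |ε| * (π / 2 + β) + β
  have hβ : -(π / 2) < β := neg_pi_div_two_lt_arctan M
  have hβa : β ≤ a := le_add_of_nonneg_left (mul_nonneg (abs_nonneg ε) (by linarith))
  have ha : a < π / 2 := by
    have := (lt_div_iff₀ (by linarith : 0 < π + 2 * β)).mp hε
    show |ε| * (π / 2 + β) + β < π / 2
    linarith
  have hφm : Measurable φ :=
    (LipschitzWith.of_dist_le' (K := M) fun s t => by
      simpa only [Real.dist_eq] using hφ s t).continuous.measurable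
  refine ⟨β + (π / 2 - a) / 2, π / 2 - ε * (π / 2), by linarith, by linarith, ?_⟩
  filter_upwards [ae_sigma0_mem_gBdry_re_ne_zero hφm] with z ⟨hz, hre⟩
  rw [dotR_rotate_cpowB_nuVec]
  have hR : 0 < ‖z‖ ^ ε := rpow_pos_of_pos (norm_pos_iff.mpr fun h => hre (by simp [h])) ε
  set A := ε * (argB z - π / 2) - arctan (deriv φ z.re)
  have hA : |A| ≤ a := abs_boundary_angle_le hφ hφ0 ε hz hre
  constructor
  · exact neg_le_neg (mul_le_of_le_one_right hR.le (cos_le_one A))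
  · refine neg_lt_neg (mul_lt_mul_of_pos_left (sin_lt_cos_of_abs_lt ?_ ?_) hR) <;> linarith

/-- construction of the holomorphic vector field `α(z) = e^{iλ} z^ε` with
`−|x|^ε ≤ α·ν < −|x|^ε sin(β₀ − β)` a.e. on `∂Ω`. -/
theorem statement2 (φ : ℝ → ℝ) (M : ℝ)
    (hφ : ∀ s t, |φ s - φ t| ≤ M * |s - t|) (hφ0 : φ 0 = 0) (hM : 0 < M)
    (ε : ℝ) (hε : |ε| < (π - 2 * Real.arctan M) / (π + 2 * Real.arctan M)) :
    ∃ β₀ lam : ℝ, Real.arctan M < β₀ ∧ β₀ < π / 2 ∧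
      ∀ᵐ x ∂(sigma0 φ),
        -(‖x‖ ^ ε) ≤ dotR (Complex.exp (Complex.I * lam) * cpowB ε x) (nuVec φ x) ∧
        dotR (Complex.exp (Complex.I * lam) * cpowB ε x) (nuVec φ x)
          < -(‖x‖ ^ ε * Real.sin (β₀ - Real.arctan M)) :=
  statement2_general φ M hφ hφ0 ε hε
end
end

section
/- Let Ω be a Lipschitz graph domain, and suppose u is harmonic in Ω, the nontangential maximal function (∇u)* is in L¹_loc(∂Ω, dσ), and either the nontangential limit of u is 0 at σ-a.e. point of ∂Ω, or ∇u has nontangential limits σ-a.e. with ∂u/∂ν = 0 a.e. on ∂Ω. Then for every bounded set B ⊂ Ω, the gradient ∇u belongs to L²(B). -/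
open MeasureTheory Filter Set
open scoped ENNReal Topology Real NNReal

noncomputable section

/-! A point `z ∈ Ω` at height `d = z₂ - φ(z₁)` above the boundary lies in the cone `Γ(s, φ(s))`
for every `s` within `c·d` of `z₁` (`c` depending on `M` and `θ₀`), so `|∇u(z)| ≤ (∇u)*` on a
boundary interval of length `2cd`. For bounded `B` these intervals stay in some `[-R, R]`; let
`A = ∫_{[-R,R]} (∇u)*(s, φ(s)) ds`, finite by the local integrability. Then `{|∇u| ≥ t} ∩ B` lies
in the tent of height `|S_t|/c` over `S_t = {s ∈ [-R, R] : (∇u)*(s, φ(s)) ≥ t}`, so its area is at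
most `|S_t|²/c`. Chebyshev's inequality `t |S_t| ≤ A` and the layer-cake formula then give
`∫_B |∇u|² ≤ 2A²/c`. Measurability of `(∇u)*` comes from its lower semicontinuity. -/

theorem arg_eq_pi_div_two_sub_arctan {w : ℂ} (hw : 0 < w.im) :
    Complex.arg w = π / 2 - Real.arctan (w.re / w.im) := by
  set q := w.re / w.im
  have hs : 0 < √(1 + q ^ 2) := by positivity
  set θ := π / 2 - Real.arctan q
  have hθ : θ ∈ Ioc (-π) π := by
    have := Real.arctan_mem_Ioo q
    simp only [θ, mem_Ioc]
    constructor <;> linarith [this.1, this.2, Real.pi_pos]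
  have hcos : w.im * √(1 + q ^ 2) * Real.cos θ = w.re := by
    rw [Real.cos_pi_div_two_sub, Real.sin_arctan]
    simp only [q]
    field_simp
  have hsin : w.im * √(1 + q ^ 2) * Real.sin θ = w.im := by
    rw [Real.sin_pi_div_two_sub, Real.cos_arctan]
    field_simp
  have hw' : w = ((w.im * √(1 + q ^ 2) : ℝ) : ℂ) * (Complex.cos θ + Complex.sin θ * Complex.I) := by
    apply Complex.ext <;> simp [← Complex.ofReal_cos, ← Complex.ofReal_sin, hcos, hsin]
  rw [hw', Complex.arg_mul_cos_add_sin_mul_I (by positivity) hθ]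

theorem abs_arctan_lt_iff {q θ : ℝ} (h₀ : -(π / 2) < θ) (h₁ : θ < π / 2) :
    |Real.arctan q| < θ ↔ |q| < Real.tan θ := by
  conv_lhs => rw [← Real.arctan_tan h₀ h₁]
  rw [abs_lt, abs_lt, ← Real.arctan_neg, Real.arctan_lt_arctan_iff, Real.arctan_lt_arctan_iff]

theorem mem_ntCone_iff {θ₀ : ℝ} (hθ₀ : 0 < θ₀) (hθh : θ₀ < π / 2) {x z : ℂ} :
    z ∈ ntCone θ₀ x ↔ 0 < (z - x).im ∧ |(z - x).re| < Real.tan θ₀ * (z - x).im := by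
  have key : ∀ w : ℂ, 0 < w.im →
      (|Complex.arg w - π / 2| < θ₀ ↔ |w.re| < Real.tan θ₀ * w.im) := by
    intro w hw
    rw [arg_eq_pi_div_two_sub_arctan hw, sub_sub_cancel_left, abs_neg,
      abs_arctan_lt_iff (by linarith) hθh, abs_div, abs_of_pos hw, div_lt_iff₀ hw, mul_comm]
  constructor
  · rintro ⟨hne, harg⟩
    obtain ⟨harg₀, harg₁⟩ := abs_lt.1 harg
    have him : 0 < (z - x).im := by
      have hsin := Real.sin_pos_of_pos_of_lt_pi (by linarith) (by linarith)
      rw [Complex.sin_arg] at hsin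
      exact (div_pos_iff_of_pos_right (norm_pos_iff.2 (sub_ne_zero.2 hne))).1 hsin
    exact ⟨him, (key _ him).1 harg⟩
  · rintro ⟨him, hre⟩
    exact ⟨fun h => by simp [h] at him, (key _ him).2 hre⟩

theorem isOpen_setOf_mem_ntCone {θ₀ : ℝ} (hθ₀ : 0 < θ₀) (hθh : θ₀ < π / 2) (z : ℂ) :
    IsOpen {x | z ∈ ntCone θ₀ x} := by
  simp_rw [mem_ntCone_iff hθ₀ hθh]
  have hw : Continuous fun x : ℂ => z - x := continuous_const.sub continuous_id
  exact (isOpen_lt continuous_const (Complex.continuous_im.comp hw)).inter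
    (isOpen_lt (Complex.continuous_re.comp hw).abs
      (continuous_const.mul (Complex.continuous_im.comp hw)))

theorem lowerSemicontinuous_ntMax {θ₀ : ℝ} (hθ₀ : 0 < θ₀) (hθh : θ₀ < π / 2) (φ : ℝ → ℝ)
    (v : ℂ → ℝ) : LowerSemicontinuous (ntMax φ θ₀ v) := by
  refine lowerSemicontinuous_iSup fun y => ?_
  have hopen : IsOpen {x | y ∈ ntRegion φ θ₀ x} :=
    (isOpen_setOf_mem_ntCone hθ₀ hθh y).inter isOpen_const
  convert hopen.lowerSemicontinuous_indicator (zero_le : 0 ≤ ENNReal.ofReal (v y)) using 1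
  ext x
  classical
  rw [iSup_eq_if, indicator_apply]
  rfl

def bdryShadow (φ : ℝ → ℝ) (c : ℝ) (z : ℂ) : Set ℝ :=
  Metric.closedBall z.re (c * (z.im - φ z.re))

theorem mem_ntRegion_of_mem_bdryShadow {φ : ℝ → ℝ} {M θ₀ c : ℝ}
    (hφ : ∀ s t, |φ s - φ t| ≤ M * |s - t|) (hM : 0 ≤ M) (hθ₀ : 0 < θ₀) (hθh : θ₀ < π / 2)
    (hc : c * (1 + M * Real.tan θ₀) < Real.tan θ₀) {z : ℂ} (hz : z ∈ gDomain φ) {s : ℝ}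
    (hs : s ∈ bdryShadow φ c z) : z ∈ ntRegion φ θ₀ (bmap φ s) := by
  refine ⟨(mem_ntCone_iff hθ₀ hθh).2 ?_, hz⟩
  have hd : 0 < z.im - φ z.re := sub_pos.2 hz
  have hT : 0 < Real.tan θ₀ := Real.tan_pos_of_pos_of_lt_pi_div_two hθ₀ hθh
  have ha : |z.re - s| ≤ c * (z.im - φ z.re) := by
    rw [abs_sub_comm]; exact hs
  have hφs : φ z.re - φ s ≥ -(M * (c * (z.im - φ z.re))) := by
    have := neg_le_of_abs_le (hφ z.re s)
    nlinarith
  have hcd : c * (z.im - φ z.re) < Real.tan θ₀ * ((1 - M * c) * (z.im - φ z.re)) := by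
    nlinarith
  have hre : |z.re - s| < Real.tan θ₀ * (z.im - φ s) := by
    nlinarith
  simp only [bmap, Complex.sub_re, Complex.sub_im]
  exact ⟨by nlinarith [abs_nonneg (z.re - s)], hre⟩

theorem volume_le_sq_div_of_bdryShadow_subset {φ : ℝ → ℝ} (hφ : Measurable φ) {c : ℝ}
    (hc : 0 < c) {S : Set ℝ} (hS : MeasurableSet S) {E : Set ℂ} (hEΩ : E ⊆ gDomain φ)
    (hES : ∀ z ∈ E, bdryShadow φ c z ⊆ S) :
    volume E ≤ volume S ^ 2 / ENNReal.ofReal c := by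
  rcases eq_or_ne (volume S) ⊤ with hS_top | hS_fin
  · simp [hS_top, ENNReal.top_div_of_ne_top ENNReal.ofReal_ne_top]
  set H := (volume S).toReal / c
  have hsub : E ⊆ Complex.measurableEquivRealProd ⁻¹' regionBetween φ (fun x => φ x + H) S := by
    intro z hz
    have hd : 0 < z.im - φ z.re := sub_pos.2 (hEΩ hz)
    have hball := measure_mono (μ := volume) (hES z hz)
    rw [bdryShadow, Real.volume_closedBall,
      ENNReal.ofReal_le_iff_le_toReal hS_fin] at hball
    refine ⟨hES z hz (Metric.mem_closedBall_self (by positivity)), hEΩ hz, ?_⟩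
    show z.im < φ z.re + H
    have : z.im - φ z.re < H := by
      rw [lt_div_iff₀ hc]; nlinarith
    linarith
  calc volume E
      ≤ volume (Complex.measurableEquivRealProd ⁻¹' regionBetween φ (fun x => φ x + H) S) :=
        measure_mono hsub
    _ = (volume.prod volume) (regionBetween φ (fun x => φ x + H) S) := by
        rw [← Measure.volume_eq_prod]
        exact Complex.volume_preserving_equiv_real_prod.measure_preimage
          (measurableSet_regionBetween hφ (hφ.add_const H) hS).nullMeasurableSet
    _ = ENNReal.ofReal H * volume S := by
        rw [volume_regionBetween_eq_lintegral' hφ (hφ.add_const H) hS]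
        simp only [Pi.sub_apply, add_sub_cancel_left, setLIntegral_const]
    _ = volume S ^ 2 / ENNReal.ofReal c := by
        rw [ENNReal.ofReal_div_of_pos hc, ENNReal.ofReal_toReal hS_fin, sq, mul_comm,
          mul_div_assoc]

theorem setLIntegral_Ioi_measure_le_lintegral {α : Type*} [MeasurableSpace α] (μ : Measure α)
    {g : α → ℝ≥0∞} (hg : AEMeasurable g μ) :
    ∫⁻ t in Ioi 0, μ {a | ENNReal.ofReal t ≤ g a} ≤ ∫⁻ a, g a ∂μ := by
  rcases eq_or_ne (∫⁻ a, g a ∂μ) ⊤ with htop | hfin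
  · simp [htop]
  have hg_fin : ∀ᵐ a ∂μ, g a ≠ ⊤ := (ae_lt_top' hg hfin).mono fun _ => ne_of_lt
  calc ∫⁻ t in Ioi 0, μ {a | ENNReal.ofReal t ≤ g a}
      ≤ ∫⁻ t in Ioi 0, μ {a | t ≤ (g a).toReal} := by
        refine lintegral_mono fun t => measure_mono_ae ?_
        filter_upwards [hg_fin] with a ha h
        exact (ENNReal.ofReal_le_iff_le_toReal ha).1 h
    _ = ∫⁻ a, ENNReal.ofReal (g a).toReal ∂μ :=
        (lintegral_eq_lintegral_meas_le μ (ae_of_all _ fun _ => ENNReal.toReal_nonneg)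
          hg.ennreal_toReal).symm
    _ ≤ ∫⁻ a, g a ∂μ := lintegral_mono fun _ => ENNReal.ofReal_toReal_le

theorem lintegral_sq_le_of_le_on_bdryShadow {φ : ℝ → ℝ} (hφ : Measurable φ) {c : ℝ}
    (hc : 0 < c) {I : Set ℝ} (hI : MeasurableSet I) {g : ℝ → ℝ≥0∞} (hg : Measurable g)
    {f : ℂ → ℝ} (hf : Measurable f) (hf₀ : ∀ z, 0 ≤ f z) {B : Set ℂ} (hBΩ : B ⊆ gDomain φ)
    (hBI : ∀ z ∈ B, bdryShadow φ c z ⊆ I)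
    (hfg : ∀ z ∈ B, ∀ s ∈ bdryShadow φ c z, ENNReal.ofReal (f z) ≤ g s) :
    ∫⁻ z in B, ENNReal.ofReal (f z ^ 2) ≤ 2 * (∫⁻ s in I, g s) ^ 2 / ENNReal.ofReal c := by
  set A := ∫⁻ s in I, g s
  rcases eq_or_ne A ⊤ with hA | hA
  · simp [hA, ENNReal.top_div_of_ne_top ENNReal.ofReal_ne_top]
  set level : ℝ → Set ℝ := fun t => {s | ENNReal.ofReal t ≤ g s} ∩ I
  have hlevel : ∀ t, MeasurableSet {s | ENNReal.ofReal t ≤ g s} := fun t =>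
    measurableSet_le measurable_const hg
  have hcheb : ∀ t, ENNReal.ofReal t * volume (level t) ≤ A := fun t => by
    rw [← Measure.restrict_apply (hlevel t)]
    exact mul_meas_ge_le_lintegral₀ hg.aemeasurable _
  have hlayer : ∫⁻ t in Ioi 0, volume (level t) ≤ A := by
    simpa only [Measure.restrict_apply (hlevel _)] using
      setLIntegral_Ioi_measure_le_lintegral (volume.restrict I) hg.aemeasurable
  have htent : ∀ t, volume.restrict B {z | t ≤ f z} ≤ volume (level t) ^ 2 / ENNReal.ofReal c := by
    intro t
    rw [Measure.restrict_apply (measurableSet_le measurable_const hf)]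
    refine volume_le_sq_div_of_bdryShadow_subset hφ hc ((hlevel t).inter hI)
      (fun z hz => hBΩ hz.2) ?_
    rintro z ⟨hzt, hzB⟩ s hs
    exact ⟨(ENNReal.ofReal_le_ofReal hzt).trans (hfg z hzB s hs), hBI z hzB hs⟩
  have hsq : ∀ x, ∫ t in (0 : ℝ)..x, 2 * t = x ^ 2 := fun x => by
    rw [intervalIntegral.integral_const_mul, integral_id]; ring
  calc ∫⁻ z in B, ENNReal.ofReal (f z ^ 2)
      = ∫⁻ t in Ioi 0, volume.restrict B {z | t ≤ f z} * ENNReal.ofReal (2 * t) := by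
        simp_rw [← hsq]
        exact lintegral_comp_eq_lintegral_meas_le_mul _ (ae_of_all _ hf₀) hf.aemeasurable
          (fun t _ => (continuous_const.mul continuous_id).intervalIntegrable 0 t)
          ((ae_restrict_mem measurableSet_Ioi).mono fun t (ht : 0 < t) => by linarith)
    _ ≤ ∫⁻ t in Ioi 0, 2 * A / ENNReal.ofReal c * volume (level t) := by
        refine setLIntegral_mono' measurableSet_Ioi fun t (ht : 0 < t) => ?_
        rw [ENNReal.ofReal_mul zero_le_two, ENNReal.ofReal_ofNat]
        calc volume.restrict B {z | t ≤ f z} * (2 * ENNReal.ofReal t)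
            ≤ volume (level t) ^ 2 / ENNReal.ofReal c * (2 * ENNReal.ofReal t) := by
              gcongr; exact htent t
          _ = 2 * (ENNReal.ofReal t * volume (level t)) / ENNReal.ofReal c * volume (level t) := by
              simp only [div_eq_mul_inv]; ring
          _ ≤ 2 * A / ENNReal.ofReal c * volume (level t) := by
              gcongr; exact hcheb t
    _ = 2 * A / ENNReal.ofReal c * ∫⁻ t in Ioi 0, volume (level t) :=
        lintegral_const_mul' _ _ (ENNReal.div_ne_top (ENNReal.mul_ne_top ENNReal.ofNat_ne_top hA)
          (ENNReal.ofReal_pos.2 hc).ne')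
    _ ≤ 2 * A / ENNReal.ofReal c * A := by gcongr
    _ = 2 * A ^ 2 / ENNReal.ofReal c := by simp only [div_eq_mul_inv]; ring

theorem continuous_bmap {φ : ℝ → ℝ} (hφ : Continuous φ) : Continuous (bmap φ) :=
  Complex.equivRealProdCLM.symm.continuous.comp (continuous_id.prodMk hφ)

theorem bmap_injective (φ : ℝ → ℝ) : Function.Injective (bmap φ) :=
  fun _ _ h => congrArg Complex.re h

theorem measurable_grad (u : ℂ → ℝ) : Measurable (grad u) :=
  Complex.measurableEquivRealProd.symm.measurable.comp
    ((measurable_fderiv_apply_const ℝ u 1).prodMk (measurable_fderiv_apply_const ℝ u Complex.I))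

theorem setLIntegral_comp_bmap_le {φ : ℝ → ℝ} (hφ : Continuous φ) {K : Set ℂ}
    (hK : MeasurableSet K) {F : ℂ → ℝ≥0∞} (hF : Measurable F) :
    ∫⁻ s in bmap φ ⁻¹' K, F (bmap φ s) ≤ ∫⁻ x in K, F x ∂sigma0 φ := by
  have hdens : volume ≤ volume.withDensity fun t => ENNReal.ofReal √(1 + deriv φ t ^ 2) := by
    refine (withDensity_one (μ := volume)).symm.le.trans (withDensity_mono (ae_of_all _ ?_))
    intro t
    simp only [Pi.one_apply, ENNReal.one_le_ofReal, Real.one_le_sqrt]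
    linarith [sq_nonneg (deriv φ t)]
  rw [sigma0, setLIntegral_map hK hF (continuous_bmap hφ).measurable]
  exact lintegral_mono' (Measure.restrict_mono le_rfl hdens) le_rfl

theorem exists_bdryShadow_subset_Icc {φ : ℝ → ℝ} (hφ : Continuous φ) {B : Set ℂ}
    (hB : Bornology.IsBounded B) (c : ℝ) : ∃ R, ∀ z ∈ B, bdryShadow φ c z ⊆ Icc (-R) R := by
  obtain ⟨R, hR⟩ := hB.isCompact_closure.exists_bound_of_continuousOn
    (f := fun z : ℂ => |z.re| + c * (z.im - φ z.re)) (by fun_prop)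
  refine ⟨R, fun z hz s hs => abs_le.1 ?_⟩
  have hzR := (le_abs_self _).trans ((Real.norm_eq_abs _).symm.trans_le (hR z (subset_closure hz)))
  rw [bdryShadow, Metric.mem_closedBall, Real.dist_eq] at hs
  linarith [abs_sub_abs_le_abs_sub s z.re]

theorem statement5_general (φ : ℝ → ℝ) (M θ₀ : ℝ)
    (hφ : ∀ s t, |φ s - φ t| ≤ M * |s - t|) (hM0 : 0 ≤ M)
    (hθ₀ : 0 < θ₀) (hθ₁ : θ₀ < π / 2 - Real.arctan M)
    (u : ℂ → ℝ)
    (hloc : ∀ K : Set ℂ, IsCompact K →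
      (∫⁻ x in K, ntMax φ θ₀ (fun y => ‖grad u y‖) x ∂(sigma0 φ)) < ⊤) :
    ∀ B : Set ℂ, B ⊆ gDomain φ → Bornology.IsBounded B →
      (∫⁻ z in B, ENNReal.ofReal (‖grad u z‖ ^ 2) ∂volume) < ⊤ := by
  intro B hBΩ hBb
  have hθh : θ₀ < π / 2 := by linarith [Real.arctan_nonneg.2 hM0]
  have hT : 0 < Real.tan θ₀ := Real.tan_pos_of_pos_of_lt_pi_div_two hθ₀ hθh
  set c := Real.tan θ₀ / (2 * (1 + M * Real.tan θ₀))
  have hc : 0 < c := by positivity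
  have hcT : c * (1 + M * Real.tan θ₀) < Real.tan θ₀ := by
    rw [div_mul_eq_mul_div, div_lt_iff₀ (by positivity)]
    nlinarith [mul_pos hT (by positivity : 0 < 1 + M * Real.tan θ₀)]
  have hφc : Continuous φ := (LipschitzWith.of_dist_le_mul (K := M.toNNReal) fun s t => by
    simpa [Real.dist_eq, max_eq_left hM0] using hφ s t).continuous
  obtain ⟨R, hR⟩ := exists_bdryShadow_subset_Icc hφc hBb c
  set F := ntMax φ θ₀ fun y => ‖grad u y‖
  have hF : Measurable F := (lowerSemicontinuous_ntMax hθ₀ hθh φ _).measurable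
  have hK : IsCompact (bmap φ '' Icc (-R) R) := isCompact_Icc.image (continuous_bmap hφc)
  have hA : ∫⁻ s in Icc (-R) R, F (bmap φ s) < ⊤ := by
    rw [← (bmap_injective φ).preimage_image (Icc (-R) R)]
    exact (setLIntegral_comp_bmap_le hφc hK.measurableSet hF).trans_lt (hloc _ hK)
  refine (lintegral_sq_le_of_le_on_bdryShadow hφc.measurable hc measurableSet_Icc
    (hF.comp (continuous_bmap hφc).measurable) (measurable_grad u).norm (fun _ => norm_nonneg _)
    hBΩ hR fun z hz s hs => ?_).trans_lt ?_
  · exact le_iSup₂ (f := fun y _ => ENNReal.ofReal ‖grad u y‖) z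
      (mem_ntRegion_of_mem_bdryShadow hφ hM0 hθ₀ hθh hcT (hBΩ hz) hs)
  · exact ENNReal.div_lt_top (ENNReal.mul_ne_top ENNReal.ofNat_ne_top (ENNReal.pow_ne_top hA.ne))
      (ENNReal.ofReal_pos.2 hc).ne'

/-- local regularity: if `u` is harmonic in `Ω` with zero Dirichlet or zero
Neumann data and `(∇u)* ∈ L¹_loc(∂Ω, dσ)`, then `∇u ∈ L²(B)` for every bounded `B ⊂ Ω`. -/
theorem statement5 (φ : ℝ → ℝ) (M θ₀ : ℝ)
    (hφ : ∀ s t, |φ s - φ t| ≤ M * |s - t|) (hφ0 : φ 0 = 0) (hM0 : 0 ≤ M)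
    (hθ₀ : 0 < θ₀) (hθ₁ : θ₀ < π / 2 - Real.arctan M)
    (u : ℂ → ℝ) (hu : HarmOn u (gDomain φ))
    (hloc : ∀ K : Set ℂ, IsCompact K →
      (∫⁻ x in K, ntMax φ θ₀ (fun y => ‖grad u y‖) x ∂(sigma0 φ)) < ⊤)
    (hbc : (∀ᵐ x ∂(sigma0 φ), NTLim φ θ₀ u x 0) ∨
      (∃ g : ℂ → ℂ, (∀ᵐ x ∂(sigma0 φ), NTLim φ θ₀ (grad u) x (g x)) ∧
        ∀ᵐ x ∂(sigma0 φ), dotR (g x) (nuVec φ x) = 0)) :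
    ∀ B : Set ℂ, B ⊆ gDomain φ → Bornology.IsBounded B →
      (∫⁻ z in B, ENNReal.ofReal (‖grad u z‖ ^ 2) ∂volume) < ⊤ :=
  statement5_general φ M θ₀ hφ hM0 hθ₀ hθ₁ u hloc
end
end
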